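/- arXiv:2605.16389 — 2 statements merged into one kernel-verified Lean document; each statement's English description precedes it below -/
import Mathlib

section
/- For 0 < α < 1 and any odd natural number N, the partial sum ∑_{k=0}^{N} C(α,k) · k(k−1) is nonnegative; consequently ∑_{k=0}^{N} C(α,k)·k ≤ ∑_{k=0}^{N} C(α,k)·k². -/
/-- Generalized binomial coefficient `C(α, k) = α(α−1)⋯(α−k+1)/k!` for real `α`. -/
noncomputable def genBinom (α : ℝ) (k : ℕ) : ℝ :=
  (∏ i ∈ Finset.range k, (α - i)) / (Nat.factorial k)

/-!
Since `C(α, k+1) (k+1) = C(α, k) (α - k)`, consecutive terms of `∑ C(α,k) k(k-1)` combine as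
`C(α,k) k(k-1) + C(α,k+1) (k+1) k = C(α,k) k (α-1)`. For `0 < α < 1` the coefficients `C(α,k)`,
`k ≥ 1`, alternate in sign starting positive, so `C(α,2j) ≤ 0` for `j ≥ 1`; hence each pair
`(2j, 2j+1)` contributes `C(α,2j) 2j (α-1) ≥ 0`, and an odd `N` leaves no unpaired term.
-/

open Finset

theorem Finset.sum_range_two_mul {M : Type*} [AddCommMonoid M] (f : ℕ → M) (m : ℕ) :
    ∑ k ∈ range (2 * m), f k = ∑ j ∈ range m, (f (2 * j) + f (2 * j + 1)) := by
  induction m with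
  | zero => simp
  | succ m ih => rw [mul_add, mul_one, sum_range_succ, sum_range_succ, sum_range_succ, ih, add_assoc]

theorem genBinom_succ (α : ℝ) (k : ℕ) :
    genBinom α (k + 1) = genBinom α k * (α - k) / (k + 1) := by
  have hfac : (k.factorial : ℝ) ≠ 0 := by exact_mod_cast k.factorial_ne_zero
  simp only [genBinom, prod_range_succ, Nat.factorial_succ]
  push_cast
  field_simp

theorem genBinom_mul_mul_sub_one_add_succ (α : ℝ) (k : ℕ) :
    genBinom α k * (k * (k - 1)) + genBinom α (k + 1) * ((k + 1 : ℕ) * ((k + 1 : ℕ) - 1)) =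
      genBinom α k * k * (α - 1) := by
  rw [genBinom_succ]
  push_cast
  field_simp
  ring

theorem neg_one_pow_mul_genBinom_succ_nonneg {α : ℝ} (h0 : 0 ≤ α) (h1 : α ≤ 1) (k : ℕ) :
    0 ≤ (-1) ^ k * genBinom α (k + 1) := by
  induction k with
  | zero => simpa [genBinom] using h0
  | succ k ih =>
    have hstep : (-1) ^ (k + 1) * genBinom α (k + 1 + 1) =
        (-1) ^ k * genBinom α (k + 1) * ((k + 1 - α) / (k + 2)) := by
      rw [genBinom_succ]
      push_cast
      ring
    rw [hstep]
    exact mul_nonneg ih (div_nonneg (by linarith [k.cast_nonneg (α := ℝ)]) (by positivity))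

theorem genBinom_two_mul_add_two_nonpos {α : ℝ} (h0 : 0 ≤ α) (h1 : α ≤ 1) (j : ℕ) :
    genBinom α (2 * j + 2) ≤ 0 := by
  have h := neg_one_pow_mul_genBinom_succ_nonneg h0 h1 (2 * j + 1)
  rwa [pow_succ, pow_mul, neg_one_sq, one_pow, one_mul, neg_one_mul, neg_nonneg] at h

theorem sum_range_two_mul_genBinom_mul_mul_sub_one_nonneg {α : ℝ} (h0 : 0 ≤ α) (h1 : α ≤ 1) (m : ℕ) :
    0 ≤ ∑ k ∈ range (2 * m), genBinom α k * ((k : ℝ) * ((k : ℝ) - 1)) := by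
  rw [sum_range_two_mul]
  refine sum_nonneg fun j _ => ?_
  rw [genBinom_mul_mul_sub_one_add_succ]
  rcases j with _ | j
  · simp
  · have hneg := genBinom_two_mul_add_two_nonpos h0 h1 j
    rw [show 2 * (j + 1) = 2 * j + 2 by ring]
    exact mul_nonneg_of_nonpos_of_nonpos
      (mul_nonpos_of_nonpos_of_nonneg hneg (Nat.cast_nonneg _)) (by linarith)

/-- For `0 < α < 1` and odd `N`, `∑_{k=0}^{N} C(α,k)·k(k−1) ≥ 0`; consequently
`∑_{k=0}^{N} C(α,k)·k ≤ ∑_{k=0}^{N} C(α,k)·k²`. -/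
theorem binom_sum_k_sq_sub_k_nonneg
    (α : ℝ) (h0 : 0 < α) (h1 : α < 1) (N : ℕ) (hN : Odd N) :
    0 ≤ ∑ k ∈ Finset.range (N + 1), genBinom α k * ((k : ℝ) * ((k : ℝ) - 1)) ∧
    ∑ k ∈ Finset.range (N + 1), genBinom α k * k
      ≤ ∑ k ∈ Finset.range (N + 1), genBinom α k * (k : ℝ) ^ 2 := by
  obtain ⟨m, rfl⟩ := hN
  have hpairs : 0 ≤ ∑ k ∈ range (2 * m + 1 + 1), genBinom α k * ((k : ℝ) * ((k : ℝ) - 1)) :=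
    sum_range_two_mul_genBinom_mul_mul_sub_one_nonneg h0.le h1.le (m + 1)
  refine ⟨hpairs, ?_⟩
  have hsplit : ∑ k ∈ range (2 * m + 1 + 1), genBinom α k * (k : ℝ) ^ 2 =
      ∑ k ∈ range (2 * m + 1 + 1), genBinom α k * ((k : ℝ) * ((k : ℝ) - 1)) +
        ∑ k ∈ range (2 * m + 1 + 1), genBinom α k * k := by
    rw [← sum_add_distrib]
    exact sum_congr rfl fun k _ => by ring
  linarith
end

section
/- Let 0 < α < 1, let N ≥ 1 be an odd natural number, and let B > 0, K > 0, T > 0 be real numbers. With S_0 = ∑_{k=0}^{N} C(α,k), S_1 = ∑_{k=0}^{N} C(α,k)·k, and S_2 = ∑_{k=0}^{N} C(α,k)·k², the inequality 2·B·S_1² − K·T^α·S_2 − B·S_0·S_2 < 0 holds. -/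
lemma genBinom_zero (α : ℝ) : genBinom α 0 = 1 := by simp [genBinom]

lemma genBinom_rec (α : ℝ) (k : ℕ) :
    ((k : ℝ) + 1) * genBinom α (k + 1) = genBinom α k * (α - k) := by
  unfold genBinom
  rw [Finset.prod_range_succ, Nat.factorial_succ]
  have hk : (Nat.factorial k : ℝ) ≠ 0 := Nat.cast_ne_zero.mpr (Nat.factorial_ne_zero k)
  have hk1 : ((k : ℝ) + 1) ≠ 0 := by positivity
  push_cast
  field_simp

lemma genBinom_one (α : ℝ) : genBinom α 1 = α := by
  have h := genBinom_rec α 0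
  simpa [genBinom_zero] using h

lemma main_ind (α : ℝ) (h0 : 0 < α) (h1 : α < 1) : ∀ n : ℕ,
    0 < genBinom α (2*n+1) ∧
    genBinom α (2*n+2) < 0 ∧
    (2*n+1 : ℝ) * genBinom α (2*n+1) ≤ ∑ k ∈ Finset.range (2*n+2), genBinom α k * k ∧
    (∑ k ∈ Finset.range (2*n+2), genBinom α k * k) ≤ α ∧
    (∑ k ∈ Finset.range (2*n+2), genBinom α k * k) ≤
      (∑ k ∈ Finset.range (2*n+2), genBinom α k * (k:ℝ)^2) ∧
    2*α*(2*n+2) ≤ (2*n+2 : ℝ) * (∑ k ∈ Finset.range (2*n+1), genBinom α k)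
      + (α+1) * genBinom α (2*n+1) := by
  intro n
  induction n with
  | zero =>
    have hg1 : genBinom α 1 = α := genBinom_one α
    have hg2 : (2:ℝ) * genBinom α 2 = α * (α - 1) := by
      have h := genBinom_rec α 1
      rw [hg1] at h
      norm_num at h
      linarith [h]
    refine ⟨by simpa [hg1] using h0, by nlinarith, ?_, ?_, ?_, ?_⟩ <;>
      simp [Finset.sum_range_succ, genBinom_zero, hg1] <;> nlinarith
  | succ n ih =>
    obtain ⟨ha1, ha2, hS1lb, hS1ub, hS2, hM⟩ := ih
    have hn0 : (0:ℝ) ≤ (n:ℝ) := Nat.cast_nonneg n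
    have r1 : (2*(n:ℝ)+2) * genBinom α (2*n+2)
        = genBinom α (2*n+1) * (α - (2*(n:ℝ)+1)) := by
      have h := genBinom_rec α (2*n+1); push_cast at h; linear_combination h
    have r2 : (2*(n:ℝ)+3) * genBinom α (2*n+3)
        = genBinom α (2*n+2) * (α - (2*(n:ℝ)+2)) := by
      have h := genBinom_rec α (2*n+2); push_cast at h; linear_combination h
    have r3 : (2*(n:ℝ)+4) * genBinom α (2*n+4)
        = genBinom α (2*n+3) * (α - (2*(n:ℝ)+3)) := by
      have h := genBinom_rec α (2*n+3); push_cast at h; linear_combination h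
    have ha3 : 0 < genBinom α (2*n+3) := by
      nlinarith [r2, mul_pos_of_neg_of_neg ha2 (show α - (2*(n:ℝ)+2) < 0 by linarith)]
    have ha4 : genBinom α (2*n+4) < 0 := by
      nlinarith [r3, mul_neg_of_pos_of_neg ha3 (show α - (2*(n:ℝ)+3) < 0 by linarith)]
    -- sum splitting identities
    have hs1 : ∑ k ∈ Finset.range (2*(n+1)+2), genBinom α k * k
        = (∑ k ∈ Finset.range (2*n+2), genBinom α k * k)
          + genBinom α (2*n+2) * (2*(n:ℝ)+2) + genBinom α (2*n+3) * (2*(n:ℝ)+3) := by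
      rw [show 2*(n+1)+2 = (2*n+2)+1+1 from by ring, Finset.sum_range_succ,
        Finset.sum_range_succ]
      push_cast
      ring
    have hs2 : ∑ k ∈ Finset.range (2*(n+1)+2), genBinom α k * (k:ℝ)^2
        = (∑ k ∈ Finset.range (2*n+2), genBinom α k * (k:ℝ)^2)
          + genBinom α (2*n+2) * (2*(n:ℝ)+2)^2 + genBinom α (2*n+3) * (2*(n:ℝ)+3)^2 := by
      rw [show 2*(n+1)+2 = (2*n+2)+1+1 from by ring, Finset.sum_range_succ,
        Finset.sum_range_succ]
      push_cast
      ring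
    have hs0 : ∑ k ∈ Finset.range (2*(n+1)+1), genBinom α k
        = (∑ k ∈ Finset.range (2*n+1), genBinom α k)
          + genBinom α (2*n+1) + genBinom α (2*n+2) := by
      rw [show 2*(n+1)+1 = (2*n+1)+1+1 from by ring, Finset.sum_range_succ,
        Finset.sum_range_succ]
    have hb3 : genBinom α (2*(n+1)+1) = genBinom α (2*n+3) := by
      rw [show 2*(n+1)+1 = 2*n+3 from by ring]
    have hb4 : genBinom α (2*(n+1)+2) = genBinom α (2*n+4) := by
      rw [show 2*(n+1)+2 = 2*n+4 from by ring]
    refine ⟨by rw [hb3]; exact ha3, by rw [hb4]; exact ha4, ?_, ?_, ?_, ?_⟩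
    · rw [hs1, hb3]
      push_cast
      nlinarith [hS1lb, r1, r2, mul_pos h0 ha1]
    · rw [hs1]
      push_cast
      nlinarith [hS1ub, r2, mul_neg_of_pos_of_neg h0 ha2]
    · rw [hs1, hs2]
      have r2' : ((2*(n:ℝ)+3)^2 - (2*(n:ℝ)+3)) * genBinom α (2*n+3)
          = (2*(n:ℝ)+2) * (genBinom α (2*n+2) * (α - (2*(n:ℝ)+2))) := by
        linear_combination (2*(n:ℝ)+2) * r2
      have key : 0 < (2*(n:ℝ)+2) * ((1-α) * (-(genBinom α (2*n+2)))) :=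
        mul_pos (by positivity) (mul_pos (by linarith) (by linarith))
      linarith [hS2, r2', key]
    · rw [hs0, hb3]
      push_cast
      have hc : (0:ℝ) < 2*(n:ℝ)+2 := by positivity
      have hDnew : 2*α ≤ (∑ k ∈ Finset.range (2*n+1), genBinom α k)
          + genBinom α (2*n+1) + genBinom α (2*n+2) := by
        have h5 : (2*(n:ℝ)+2) * (2*α) ≤ (2*(n:ℝ)+2) * ((∑ k ∈ Finset.range (2*n+1), genBinom α k)
            + genBinom α (2*n+1) + genBinom α (2*n+2)) := by linarith [hM, r1]
        exact le_of_mul_le_mul_left h5 hc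
      have hf1 : (0:ℝ) ≤ (2*(n:ℝ)+4) * (((∑ k ∈ Finset.range (2*n+1), genBinom α k)
          + genBinom α (2*n+1) + genBinom α (2*n+2)) - 2*α) :=
        mul_nonneg (by positivity) (by linarith)
      have hf2 : (0:ℝ) < (α+1) * genBinom α (2*n+3) :=
        mul_pos (by linarith) ha3
      linarith [hf1, hf2]

/-- For `0 < α < 1`, odd `N ≥ 1`, and positive reals `B`, `K`, `T`, with
`S₀ = ∑_{k=0}^{N} C(α,k)`, `S₁ = ∑_{k=0}^{N} C(α,k)·k`, and
`S₂ = ∑_{k=0}^{N} C(α,k)·k²`, we have `2·B·S₁² − K·T^α·S₂ − B·S₀·S₂ < 0`. -/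
theorem second_derivative_sign_inequality
    (α : ℝ) (h0 : 0 < α) (h1 : α < 1) (N : ℕ) (hN1 : 1 ≤ N) (hNodd : Odd N)
    (B K T : ℝ) (hB : 0 < B) (hK : 0 < K) (hT : 0 < T) :
    2 * B * (∑ k ∈ Finset.range (N + 1), genBinom α k * k) ^ 2
      - K * T ^ α * (∑ k ∈ Finset.range (N + 1), genBinom α k * (k : ℝ) ^ 2)
      - B * (∑ k ∈ Finset.range (N + 1), genBinom α k)
          * (∑ k ∈ Finset.range (N + 1), genBinom α k * (k : ℝ) ^ 2) < 0 := by
  obtain ⟨n, rfl⟩ : ∃ n, N = 2*n+1 := by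
    obtain ⟨m, hm⟩ := hNodd; exact ⟨m, by omega⟩
  obtain ⟨ha1, ha2, hS1lb, hS1ub, hS2, hM⟩ := main_ind α h0 h1 n
  rw [show 2*n+1+1 = 2*n+2 from rfl]
  set S1 := ∑ k ∈ Finset.range (2*n+2), genBinom α k * (k:ℝ) with hS1def
  set S2 := ∑ k ∈ Finset.range (2*n+2), genBinom α k * (k:ℝ)^2 with hS2def
  set S0 := ∑ k ∈ Finset.range (2*n+2), genBinom α k with hS0def
  have hsplit : S0 = (∑ k ∈ Finset.range (2*n+1), genBinom α k) + genBinom α (2*n+1) := by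
    rw [hS0def, show 2*n+2 = (2*n+1)+1 from rfl, Finset.sum_range_succ]
  have hS1pos : 0 < S1 := by
    have hpa : (0:ℝ) < (2*(n:ℝ)+1) * genBinom α (2*n+1) :=
      mul_pos (by positivity) ha1
    linarith [hpa, hS1lb]
  have hS2pos : 0 < S2 := lt_of_lt_of_le hS1pos hS2
  have hc : (0:ℝ) < 2*(n:ℝ)+2 := by positivity
  have hS0ge : 2*α ≤ S0 := by
    have h6 : (α+1) * genBinom α (2*n+1) ≤ (2*(n:ℝ)+2) * genBinom α (2*n+1) :=
      mul_le_mul_of_nonneg_right (by linarith [(Nat.cast_nonneg n : (0:ℝ) ≤ (n:ℝ))]) ha1.le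
    have h5 : (2*(n:ℝ)+2) * (2*α) ≤ (2*(n:ℝ)+2) * S0 := by
      rw [hsplit]; linarith [hM, h6]
    exact le_of_mul_le_mul_left h5 hc
  have h2 : 2*S1^2 ≤ S0*S2 := by
    have a := mul_le_mul_of_nonneg_right hS1ub hS1pos.le
    have b := mul_le_mul_of_nonneg_right hS0ge hS1pos.le
    have c := mul_le_mul_of_nonneg_left hS2 (le_trans (by linarith : (0:ℝ) ≤ 2*α) hS0ge)
    nlinarith [a, b, c]
  have hTpow : 0 < T ^ α := Real.rpow_pos_of_pos hT α
  have h3 : B*(2*S1^2) ≤ B*(S0*S2) := mul_le_mul_of_nonneg_left h2 hB.le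
  have h4 : 0 < K * T ^ α * S2 := mul_pos (mul_pos hK hTpow) hS2pos
  nlinarith [h3, h4]
end
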